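/- Fix an integer N ≥ 1 and real numbers η₁, …, η_{N−1} with η_i > 0 for all 1 ≤ i ≤ N−1, and let A and B be the N×N matrices defined below. Suppose δ ∈ (0,1] and θ, θ̃ : [0, δ) → ℝ^N are each given by a power series converging on [0, δ) and satisfy ξ(ξ−1)θ'(ξ) = (ξ−1)Aθ(ξ) − ξBθ(ξ) for all ξ ∈ (0, δ). Then Aθ(0) = 0 and Aθ̃(0) = 0, and if θ(0) = θ̃(0) then θ = θ̃ on [0, δ); consequently the space of such power-series solutions is at most one-dimensional. -/

import Mathlib

open Polynomial

/-- Residue matrix at `ξ = 0` (unbounded whole-plane LLE, `q = 2`). -/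
noncomputable def unboundedA (N : ℕ) (η : ℕ → ℝ) : Matrix (Fin N) (Fin N) ℝ :=
  Matrix.of fun i j =>
    if (i : ℕ) = 0 then 0
    else if (j : ℕ) = (i : ℕ) then -(η i + i) / 2
    else if (j : ℕ) + 1 = (i : ℕ) then (η i - i - 2) / 2
    else 0

/-- Residue matrix at `ξ = 1` (unbounded whole-plane LLE, `q = 2`). -/
noncomputable def unboundedB (N : ℕ) (η : ℕ → ℝ) : Matrix (Fin N) (Fin N) ℝ :=
  Matrix.of fun i j =>
    if (i : ℕ) = 0 then
      (if (j : ℕ) = 0 then 3 else if (j : ℕ) = 1 then -2 else 0)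
    else if (j : ℕ) + 1 = (i : ℕ) then (η i - i - 2) / 2
    else if (j : ℕ) = (i : ℕ) then 3 - η i
    else if (j : ℕ) = (i : ℕ) + 1 then (η i + i - 2) / 2
    else 0

/-- `θ : [0, δ) → ℝ^N` is given by a power series converging on `[0, δ)`. -/
def IsPowerSeriesOn (N : ℕ) (θ : ℝ → (Fin N → ℝ)) (δ : ℝ) : Prop :=
  ∃ c : ℕ → (Fin N → ℝ), ∀ ξ : ℝ, 0 ≤ ξ → ξ < δ →
    HasSum (fun n : ℕ => ξ ^ n • c n) (θ ξ)

set_option maxHeartbeats 1000000 in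
lemma LLE.head_zero {c : ℕ → ℝ} {δ : ℝ} (hδ : 0 < δ)
    (h : ∀ ξ : ℝ, 0 < ξ → ξ < δ → HasSum (fun n => c n * ξ ^ n) 0) : c 0 = 0 := by
  set r : ℝ := δ / 2 with hrdef
  have hr0 : 0 < r := by positivity
  have hrδ : r < δ := by rw [hrdef]; linarith
  have habs : Summable (fun n => |c (n + 1)| * r ^ (n + 1)) := by
    have h1 : Summable (fun n => c n * r ^ n) := (h r hr0 hrδ).summable
    have h2 : Summable (fun n => |c n * r ^ n|) := summable_abs_iff.2 h1
    have h3 : Summable (fun n => |c n| * r ^ n) := by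
      refine h2.congr fun n => ?_
      rw [abs_mul, abs_pow, abs_of_pos hr0]
    exact (summable_nat_add_iff 1).2 h3
  set K : ℝ := ∑' n, |c (n + 1)| * r ^ (n + 1) with hK
  have hK0 : 0 ≤ K := tsum_nonneg fun n => by positivity
  have key : ∀ ξ : ℝ, 0 < ξ → ξ ≤ r → |c 0| ≤ K * (ξ / r) := by
    intro ξ hξ0 hξr
    have hξδ : ξ < δ := lt_of_le_of_lt hξr hrδ
    have tail : HasSum (fun n => c (n + 1) * ξ ^ (n + 1)) (-(c 0)) := by
      refine (hasSum_nat_add_iff (f := fun n => c n * ξ ^ n) 1).2 ?_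
      simpa using h ξ hξ0 hξδ
    have hsumm : Summable (fun n => |c (n + 1) * ξ ^ (n + 1)|) :=
      summable_abs_iff.2 tail.summable
    have hterm : ∀ n : ℕ, |c (n + 1) * ξ ^ (n + 1)| ≤ |c (n + 1)| * r ^ (n + 1) * (ξ / r) := by
      intro n
      rw [abs_mul, abs_pow, abs_of_pos hξ0]
      have h1 : ξ ^ (n + 1) ≤ r ^ (n + 1) * (ξ / r) := by
        have he : r ^ (n + 1) * (ξ / r) = ξ * r ^ n := by
          field_simp; ring
        rw [he, pow_succ']
        gcongr
      calc |c (n + 1)| * ξ ^ (n + 1) ≤ |c (n + 1)| * (r ^ (n + 1) * (ξ / r)) := by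
            gcongr
        _ = |c (n + 1)| * r ^ (n + 1) * (ξ / r) := by ring
    have h2 : |c 0| = |∑' n, c (n + 1) * ξ ^ (n + 1)| := by
      rw [tail.tsum_eq, abs_neg]
    rw [h2]
    calc |∑' n, c (n + 1) * ξ ^ (n + 1)| ≤ ∑' n, |c (n + 1) * ξ ^ (n + 1)| := by
          have := norm_tsum_le_tsum_norm (f := fun n => c (n + 1) * ξ ^ (n + 1))
            (by simp only [Real.norm_eq_abs]; exact hsumm)
          simp only [Real.norm_eq_abs] at this
          exact this
      _ ≤ ∑' n, |c (n + 1)| * r ^ (n + 1) * (ξ / r) :=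
          Summable.tsum_le_tsum hterm hsumm (habs.mul_right _)
      _ = K * (ξ / r) := by rw [tsum_mul_right]
  have hce : ∀ ε : ℝ, 0 < ε → |c 0| ≤ ε := by
    intro ε hε
    set ξ : ℝ := min r (r * ε / (K + 1)) with hξdef
    have hξ0 : 0 < ξ := lt_min hr0 (by positivity)
    have hξr : ξ ≤ r := min_le_left _ _
    have h1 := key ξ hξ0 hξr
    have h2 : ξ ≤ r * ε / (K + 1) := min_le_right _ _
    have h3 : K * (ξ / r) ≤ ε := by
      have h4 : ξ / r ≤ ε / (K + 1) := by
        rw [div_le_div_iff₀ hr0 (by positivity)]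
        rw [le_div_iff₀ (by positivity)] at h2
        nlinarith
      calc K * (ξ / r) ≤ K * (ε / (K + 1)) := by
            apply mul_le_mul_of_nonneg_left h4 hK0
        _ ≤ ε := by
            rw [mul_div_assoc']
            rw [div_le_iff₀ (by positivity)]
            nlinarith
    linarith
  have h5 : |c 0| ≤ 0 := by
    by_contra hcon
    push_neg at hcon
    have := hce (|c 0| / 2) (by linarith)
    linarith
  exact abs_eq_zero.mp (le_antisymm h5 (abs_nonneg _))

lemma LLE.scalar_zero {c : ℕ → ℝ} {δ : ℝ} (hδ : 0 < δ)
    (h : ∀ ξ : ℝ, 0 < ξ → ξ < δ → HasSum (fun n => c n * ξ ^ n) 0) (n : ℕ) : c n = 0 := by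
  have main : ∀ k : ℕ, ∀ ξ : ℝ, 0 < ξ → ξ < δ →
      HasSum (fun n => c (n + k) * ξ ^ n) 0 := by
    intro k
    induction k with
    | zero => simpa using h
    | succ k ih =>
      have hk : c k = 0 := by
        have := LLE.head_zero (c := fun n => c (n + k)) hδ ih
        simpa using this
      intro ξ hξ0 hξδ
      have tail : HasSum (fun n => c (n + 1 + k) * ξ ^ (n + 1)) 0 := by
        refine (hasSum_nat_add_iff (f := fun n => c (n + k) * ξ ^ n) 1).2 ?_
        simpa [hk] using ih ξ hξ0 hξδ
      have hmul := tail.mul_left ξ⁻¹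
      have he : (fun n => ξ⁻¹ * (c (n + 1 + k) * ξ ^ (n + 1)))
          = fun n => c (n + (k + 1)) * ξ ^ n := by
        funext n
        have h1 : n + 1 + k = n + (k + 1) := by omega
        rw [h1, pow_succ]
        field_simp
      rw [he] at hmul
      simpa using hmul
  have := LLE.head_zero (c := fun m => c (m + n)) hδ (main n)
  simpa using this

lemma LLE.vec_zero {N : ℕ} {e : ℕ → Fin N → ℝ} {δ : ℝ} (hδ : 0 < δ)
    (h : ∀ ξ : ℝ, 0 < ξ → ξ < δ → HasSum (fun n => ξ ^ n • e n) 0) (n : ℕ) : e n = 0 := by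
  funext i
  have hs : ∀ ξ : ℝ, 0 < ξ → ξ < δ → HasSum (fun n => e n i * ξ ^ n) 0 := by
    intro ξ h1 h2
    have h3 := Pi.hasSum.1 (h ξ h1 h2) i
    simpa [mul_comm] using h3
  simpa using LLE.scalar_zero hδ hs n

lemma LLE.mulVecA0 {N : ℕ} (η : ℕ → ℝ) (v : Fin N → ℝ) (i : Fin N) (h : (i : ℕ) = 0) :
    (unboundedA N η).mulVec v i = 0 := by
  rw [Matrix.mulVec, dotProduct]
  refine Finset.sum_eq_zero fun j _ => ?_
  simp [unboundedA, h]

lemma LLE.mulVecA {N : ℕ} (η : ℕ → ℝ) (v : Fin N → ℝ) (i : Fin N) (h : (i : ℕ) ≠ 0) :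
    (unboundedA N η).mulVec v i =
      (-(η i + i) / 2) * v i +
        ((η i - i - 2) / 2) * v ⟨(i : ℕ) - 1, lt_of_le_of_lt (Nat.sub_le _ _) i.isLt⟩ := by
  set jp : Fin N := ⟨(i : ℕ) - 1, lt_of_le_of_lt (Nat.sub_le _ _) i.isLt⟩ with hjp
  have key : ∀ j : Fin N, unboundedA N η i j * v j =
      (if j = i then (-(η i + i) / 2) * v j else 0)
        + (if j = jp then ((η i - i - 2) / 2) * v j else 0) := by
    intro j
    have hjpv : (jp : ℕ) = (i : ℕ) - 1 := rfl
    by_cases h1 : (j : ℕ) = (i : ℕ)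
    · have h3 : j = i := Fin.ext h1
      subst h3
      have h4 : ¬ j = jp := by
        intro hh
        have hv := congrArg Fin.val hh
        rw [hjpv] at hv
        omega
      simp [unboundedA, h, h4]
    · by_cases h2 : (j : ℕ) + 1 = (i : ℕ)
      · have h4 : j = jp := Fin.ext (by rw [hjpv]; omega)
        have h3 : ¬ j = i := fun hh => h1 (congrArg Fin.val hh)
        have e2 : ¬ ((i : ℕ) - 1 = (i : ℕ)) := by omega
        have h5 : ¬ jp = i := by
          intro hh
          have hv := congrArg Fin.val hh
          rw [hjpv] at hv
          omega
        have e3 : (i : ℕ) - 1 + 1 = (i : ℕ) := by omega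
        simp [unboundedA, h, h1, h2, h3, h4, e2, h5, e3, hjpv]
      · have h3 : ¬ j = i := fun hh => h1 (congrArg Fin.val hh)
        have h4 : ¬ j = jp := by
          intro hh
          have hv := congrArg Fin.val hh
          rw [hjpv] at hv
          omega
        simp [unboundedA, h, h1, h2, h3, h4]
  rw [Matrix.mulVec, dotProduct]
  rw [Finset.sum_congr rfl fun j _ => key j, Finset.sum_add_distrib,
    Finset.sum_ite_eq' Finset.univ i, Finset.sum_ite_eq' Finset.univ jp]
  simp

lemma LLE.inj_lemma {N : ℕ} {η : ℕ → ℝ} (hη : ∀ i : ℕ, 1 ≤ i → i ≤ N - 1 → 0 < η i)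
    {m : ℝ} (hm : 0 < m) {v : Fin N → ℝ}
    (h : ∀ i : Fin N, m * v i = (unboundedA N η).mulVec v i) : v = 0 := by
  have main : ∀ k : ℕ, ∀ i : Fin N, (i : ℕ) = k → v i = 0 := by
    intro k
    induction k using Nat.strong_induction_on with
    | _ k ih =>
      intro i hik
      by_cases h0 : (i : ℕ) = 0
      · have hz := h i
        rw [LLE.mulVecA0 η v i h0] at hz
        rcases mul_eq_zero.mp hz with hc | hc
        · exact absurd hc hm.ne'
        · exact hc
      · have hrec := h i
        rw [LLE.mulVecA η v i h0] at hrec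
        set jp : Fin N := ⟨(i : ℕ) - 1, lt_of_le_of_lt (Nat.sub_le _ _) i.isLt⟩ with hjp
        have hvjp : v jp = 0 := ih ((i : ℕ) - 1) (by omega) jp rfl
        rw [hvjp] at hrec
        have hηi : 0 < η i := hη i (by omega) (by omega)
        have hfac : (m + (η i + i) / 2) * v i = 0 := by linarith [hrec]
        have hpos : 0 < m + (η i + i) / 2 := by positivity
        rcases mul_eq_zero.mp hfac with hc | hc
        · exact absurd hc hpos.ne'
        · exact hc
  funext i
  exact main i i rfl

lemma LLE.ker_lemma {N : ℕ} {η : ℕ → ℝ} (hη : ∀ i : ℕ, 1 ≤ i → i ≤ N - 1 → 0 < η i)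
    {v : Fin N → ℝ} (h : (unboundedA N η).mulVec v = 0)
    (h0 : ∀ i : Fin N, (i : ℕ) = 0 → v i = 0) : v = 0 := by
  have main : ∀ k : ℕ, ∀ i : Fin N, (i : ℕ) = k → v i = 0 := by
    intro k
    induction k using Nat.strong_induction_on with
    | _ k ih =>
      intro i hik
      by_cases hz : (i : ℕ) = 0
      · exact h0 i hz
      · have hrec : (unboundedA N η).mulVec v i = 0 := congrFun h i
        rw [LLE.mulVecA η v i hz] at hrec
        set jp : Fin N := ⟨(i : ℕ) - 1, lt_of_le_of_lt (Nat.sub_le _ _) i.isLt⟩ with hjp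
        have hvjp : v jp = 0 := ih ((i : ℕ) - 1) (by omega) jp rfl
        rw [hvjp] at hrec
        have hηi : 0 < η i := hη i (by omega) (by omega)
        have hipos : 0 < (i : ℕ) := Nat.pos_of_ne_zero hz
        have hfac : (-(η i + i) / 2) * v i = 0 := by linarith [hrec]
        have hneg : (-(η i + i) / 2) ≠ 0 := by
          have hic : (0:ℝ) < (i:ℕ) := by exact_mod_cast hipos
          intro hc
          nlinarith
        rcases mul_eq_zero.mp hfac with hc | hc
        · exact absurd hc hneg
        · exact hc
  funext i
  exact main i i rfl

lemma LLE.rec_zero {N : ℕ} {η : ℕ → ℝ} (hη : ∀ i : ℕ, 1 ≤ i → i ≤ N - 1 → 0 < η i)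
    {B : Matrix (Fin N) (Fin N) ℝ} {c : ℕ → Fin N → ℝ} (h0 : c 0 = 0)
    (hrec : ∀ n : ℕ, ((n : ℝ) + 1) • c (n + 1) - (unboundedA N η).mulVec (c (n + 1))
      = (n : ℝ) • c n - (unboundedA N η).mulVec (c n) + B.mulVec (c n)) :
    ∀ n, c n = 0 := by
  intro n
  induction n with
  | zero => exact h0
  | succ n ih =>
    have h1 := hrec n
    rw [ih] at h1
    simp only [smul_zero, Matrix.mulVec_zero, sub_zero, add_zero, zero_sub, zero_add,
      sub_zero] at h1
    have h2 : ((n : ℝ) + 1) • c (n + 1) = (unboundedA N η).mulVec (c (n + 1)) :=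
      sub_eq_zero.mp h1
    refine LLE.inj_lemma hη (m := (n : ℝ) + 1) (by positivity) fun i => ?_
    have h3 := congrFun h2 i
    simpa [Pi.smul_apply, smul_eq_mul] using h3

set_option maxHeartbeats 2000000 in
lemma LLE.coeff_rec {N : ℕ} (A B : Matrix (Fin N) (Fin N) ℝ) {δ : ℝ} (hδ : 0 < δ)
    {θ : ℝ → Fin N → ℝ} {c : ℕ → Fin N → ℝ}
    (hc : ∀ ξ : ℝ, 0 ≤ ξ → ξ < δ → HasSum (fun n : ℕ => ξ ^ n • c n) (θ ξ))
    (hode : ∀ ξ ∈ Set.Ioo (0:ℝ) δ,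
      (ξ * (ξ - 1)) • deriv θ ξ = (ξ - 1) • A.mulVec (θ ξ) - ξ • B.mulVec (θ ξ)) :
    ∀ ξ : ℝ, 0 < ξ → ξ < δ →
      HasSum (fun n => ξ ^ n •
        (Nat.rec (A.mulVec (c 0))
          (fun m _ => (m : ℝ) • c m - ((m : ℝ) + 1) • c (m + 1)
            - A.mulVec (c m) + A.mulVec (c (m + 1)) + B.mulVec (c m)) n : Fin N → ℝ)) 0 := by
  intro ξ hξ0 hξδ
  set e : ℕ → Fin N → ℝ := fun n =>
    Nat.rec (A.mulVec (c 0))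
      (fun m _ => (m : ℝ) • c m - ((m : ℝ) + 1) • c (m + 1)
        - A.mulVec (c m) + A.mulVec (c (m + 1)) + B.mulVec (c m)) n with he
  show HasSum (fun n => ξ ^ n • e n) 0
  have he0 : e 0 = A.mulVec (c 0) := rfl
  have heS : ∀ m : ℕ, e (m + 1) = (m : ℝ) • c m - ((m : ℝ) + 1) • c (m + 1)
      - A.mulVec (c m) + A.mulVec (c (m + 1)) + B.mulVec (c m) := fun m => rfl
  -- radii
  obtain ⟨r, hξr, hrδ'⟩ : ∃ r : ℝ, ξ < r ∧ r < δ := ⟨(ξ + δ) / 2, by linarith, by linarith⟩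
  have hr0 : 0 < r := hξ0.trans hξr
  obtain ⟨r2, hrr2, hr2δ⟩ : ∃ r2 : ℝ, r < r2 ∧ r2 < δ := ⟨(r + δ) / 2, by linarith, by linarith⟩
  have hr20 : 0 < r2 := hr0.trans hrr2
  -- norm summability at r2
  have hsum2 : Summable (fun n => r2 ^ n • c n) := (hc r2 hr20.le hr2δ).summable
  have hnorm : Summable (fun n => r2 ^ n * ‖c n‖) := by
    have hcomp : ∀ i : Fin N, Summable (fun n => |r2 ^ n * c n i|) := by
      intro i
      have h1 := Pi.summable.1 hsum2 i
      exact summable_abs_iff.2 (by simpa using h1)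
    have hsumall : Summable (fun n => ∑ i : Fin N, |r2 ^ n * c n i|) :=
      summable_sum fun i _ => hcomp i
    refine hsumall.of_nonneg_of_le (fun n => by positivity) (fun n => ?_)
    have h1 : r2 ^ n * ‖c n‖ = ‖r2 ^ n • c n‖ := by
      rw [norm_smul, Real.norm_eq_abs, abs_of_pos (pow_pos hr20 n)]
    rw [h1]
    refine (pi_norm_le_iff_of_nonneg (by positivity)).2 fun i => ?_
    have h2 : ‖(r2 ^ n • c n) i‖ = |r2 ^ n * c n i| := by
      simp [Real.norm_eq_abs, abs_mul, abs_pow]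
    rw [h2]
    exact Finset.single_le_sum (f := fun i => |r2 ^ n * c n i|)
      (fun j _ => abs_nonneg _) (Finset.mem_univ i)
  set M : ℝ := ∑' n, r2 ^ n * ‖c n‖ with hM
  have hM0 : 0 ≤ M := tsum_nonneg fun n => by positivity
  have hMle : ∀ n, r2 ^ n * ‖c n‖ ≤ M := fun n =>
    Summable.le_tsum hnorm n fun m _ => by positivity
  set t : ℝ := r / r2 with htdef
  have ht0 : 0 < t := by positivity
  have ht1 : t < 1 := by rw [htdef, div_lt_one hr20]; exact hrr2
  set u : ℕ → ℝ := fun n => (n : ℝ) * r ^ (n - 1) * ‖c n‖ with hu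
  have husum : Summable u := by
    have hg : Summable (fun n : ℕ => ((n : ℝ) + 1) * t ^ n) := by
      have h1 : Summable (fun n : ℕ => (n : ℝ) * t ^ n) := by
        have h2 := summable_pow_mul_geometric_of_norm_lt_one (R := ℝ) 1
          (r := t) (by rw [Real.norm_eq_abs, abs_of_pos ht0]; exact ht1)
        simpa using h2
      have h2 : Summable (fun n : ℕ => t ^ n) := summable_geometric_of_lt_one ht0.le ht1
      simpa [add_mul] using h1.add h2
    have hw : Summable (fun n : ℕ => (n : ℝ) * t ^ (n - 1)) := by
      refine (summable_nat_add_iff 1).1 ?_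
      refine hg.congr fun n => ?_
      push_cast [Nat.add_sub_cancel]
      ring
    refine Summable.of_nonneg_of_le (fun n => by positivity) (fun n => ?_)
      (hw.mul_left (M / r2))
    cases n with
    | zero => simp [hu]
    | succ m =>
      have hb : ‖c (m + 1)‖ ≤ M / r2 ^ (m + 1) := by
        rw [le_div_iff₀ (pow_pos hr20 _)]
        calc ‖c (m + 1)‖ * r2 ^ (m + 1) = r2 ^ (m + 1) * ‖c (m + 1)‖ := mul_comm _ _
          _ ≤ M := hMle (m + 1)
      have hcast : ((m + 1 : ℕ) : ℝ) = (m : ℝ) + 1 := by push_cast; ring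
      calc u (m + 1) = ((m : ℝ) + 1) * r ^ m * ‖c (m + 1)‖ := by
            rw [hu]; simp [hcast]
        _ ≤ ((m : ℝ) + 1) * r ^ m * (M / r2 ^ (m + 1)) := by
            gcongr
        _ = M / r2 * (((m + 1 : ℕ) : ℝ) * t ^ (m + 1 - 1)) := by
            rw [htdef, div_pow, Nat.add_sub_cancel, hcast]
            field_simp
            ring
  -- derivative setup
  have hder : ∀ (n : ℕ) (x : ℝ), HasDerivAt (fun y : ℝ => y ^ n • c n)
      (((n : ℝ) * x ^ (n - 1)) • c n) x := fun n x =>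
    (hasDerivAt_pow n x).smul_const (c n)
  have hbound : ∀ (n : ℕ), ∀ x ∈ Set.Ioo (-r) r,
      ‖((n : ℝ) * x ^ (n - 1)) • c n‖ ≤ u n := by
    intro n x hx
    have hxr : |x| ≤ r := by rw [abs_le]; exact ⟨hx.1.le, hx.2.le⟩
    calc ‖((n : ℝ) * x ^ (n - 1)) • c n‖ = |(n : ℝ) * x ^ (n - 1)| * ‖c n‖ := by
          rw [norm_smul, Real.norm_eq_abs]
      _ ≤ (n : ℝ) * r ^ (n - 1) * ‖c n‖ := by
          rw [abs_mul, abs_pow, Nat.abs_cast]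
          gcongr
      _ = u n := rfl
  have hsum0 : Summable (fun n : ℕ => (0 : ℝ) ^ n • c n) := by
    have h1 : (fun n : ℕ => (0 : ℝ) ^ n • c n) = (fun n => if n = 0 then c 0 else 0) := by
      funext n; cases n <;> simp
    rw [h1]
    exact (hasSum_ite_eq 0 (c 0)).summable
  have h0mem : (0 : ℝ) ∈ Set.Ioo (-r) r := ⟨by linarith, hr0⟩
  have hξmem : ξ ∈ Set.Ioo (-r) r := ⟨by linarith, hξr⟩
  have HD : HasDerivAt (fun z : ℝ => ∑' n : ℕ, z ^ n • c n)
      (∑' n : ℕ, ((n : ℝ) * ξ ^ (n - 1)) • c n) ξ :=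
    hasDerivAt_tsum_of_isPreconnected husum isOpen_Ioo isPreconnected_Ioo
      (fun n y _ => hder n y) hbound h0mem hsum0 hξmem
  have hsummd : Summable (fun n : ℕ => ((n : ℝ) * ξ ^ (n - 1)) • c n) :=
    Summable.of_norm_bounded husum fun n => hbound n ξ hξmem
  set D : Fin N → ℝ := ∑' n : ℕ, ((n : ℝ) * ξ ^ (n - 1)) • c n with hD
  have Sd : HasSum (fun n : ℕ => ((n : ℝ) * ξ ^ (n - 1)) • c n) D := hsummd.hasSum
  have hev : θ =ᶠ[nhds ξ] fun z : ℝ => ∑' n : ℕ, z ^ n • c n := by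
    filter_upwards [isOpen_Ioo.mem_nhds (show ξ ∈ Set.Ioo (0:ℝ) δ from ⟨hξ0, hξδ⟩)] with y hy
    exact (hc y hy.1.le hy.2).tsum_eq.symm
  have HDθ : HasDerivAt θ D ξ := HD.congr_of_eventuallyEq hev
  have hderiv : deriv θ ξ = D := HDθ.deriv
  have hode' := hode ξ ⟨hξ0, hξδ⟩
  rw [hderiv] at hode'
  -- HasSum pieces
  have hθξ : HasSum (fun n : ℕ => ξ ^ n • c n) (θ ξ) := hc ξ hξ0.le hξδ
  have SA : HasSum (fun n : ℕ => ξ ^ n • A.mulVec (c n)) (A.mulVec (θ ξ)) := by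
    have h1 := (LinearMap.toContinuousLinearMap (Matrix.mulVecLin A)).hasSum hθξ
    simpa [map_smul, Matrix.mulVecLin_apply] using h1
  have SB : HasSum (fun n : ℕ => ξ ^ n • B.mulVec (c n)) (B.mulVec (θ ξ)) := by
    have h1 := (LinearMap.toContinuousLinearMap (Matrix.mulVecLin B)).hasSum hθξ
    simpa [map_smul, Matrix.mulVecLin_apply] using h1
  -- head series hh and tail series kk
  set hh : ℕ → Fin N → ℝ := fun n =>
    -(ξ • (((n : ℝ) * ξ ^ (n - 1)) • c n)) + ξ ^ n • A.mulVec (c n) with hhdef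
  set kk : ℕ → Fin N → ℝ := fun m =>
    ((m : ℝ) * ξ ^ (m + 1)) • c m - ξ ^ (m + 1) • A.mulVec (c m)
      + ξ ^ (m + 1) • B.mulVec (c m) with hkkdef
  have Sh : HasSum hh (-(ξ • D) + A.mulVec (θ ξ)) := ((Sd.const_smul ξ).neg).add SA
  have G : HasSum (fun n : ℕ => (ξ * (ξ - 1)) • (((n : ℝ) * ξ ^ (n - 1)) • c n)
      - (ξ - 1) • (ξ ^ n • A.mulVec (c n)) + ξ • (ξ ^ n • B.mulVec (c n))) 0 := by
    have h1 := ((Sd.const_smul (ξ * (ξ - 1))).sub (SA.const_smul (ξ - 1))).add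
      (SB.const_smul ξ)
    convert h1 using 1
    case e'_3 => rfl
    rw [hode']
    abel
  have Skk : HasSum kk (0 - (-(ξ • D) + A.mulVec (θ ξ))) := by
    have h1 := G.sub Sh
    have h2 : (fun n : ℕ => ((ξ * (ξ - 1)) • (((n : ℝ) * ξ ^ (n - 1)) • c n)
        - (ξ - 1) • (ξ ^ n • A.mulVec (c n)) + ξ • (ξ ^ n • B.mulVec (c n))) - hh n)
        = kk := by
      funext n
      rw [hhdef, hkkdef]
      cases n with
      | zero =>
        simp only [Nat.cast_zero, zero_mul, zero_smul, smul_zero, neg_zero, zero_add,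
          pow_zero, one_smul, pow_one]
        module
      | succ m =>
        simp only [Nat.add_sub_cancel, Nat.cast_add, Nat.cast_one]
        module
    rwa [h2] at h1
  have SF1 : HasSum (fun n : ℕ => ξ ^ (n + 1) • e (n + 1))
      ((0 - (-(ξ • D) + A.mulVec (θ ξ))) + (-(ξ • D) + A.mulVec (θ ξ) - hh 0)) := by
    have Sh1 : HasSum (fun n : ℕ => hh (n + 1)) (-(ξ • D) + A.mulVec (θ ξ) - hh 0) := by
      refine (hasSum_nat_add_iff (f := hh) 1).2 ?_
      simpa using Sh
    have h3 := Skk.add Sh1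
    have h4 : (fun n : ℕ => kk n + hh (n + 1)) = fun n : ℕ => ξ ^ (n + 1) • e (n + 1) := by
      funext m
      rw [heS, hhdef, hkkdef]
      simp only [Nat.add_sub_cancel, Nat.cast_add, Nat.cast_one]
      module
    rwa [h4] at h3
  have h5 := (hasSum_nat_add_iff (f := fun n : ℕ => ξ ^ n • e n) 1).1 SF1
  convert h5 using 1
  case e'_3 => rfl
  rw [Finset.sum_range_one, pow_zero, one_smul, he0]
  have hh0 : hh 0 = A.mulVec (c 0) := by
    rw [hhdef]
    simp
  rw [hh0]
  abel

lemma LLE.rec_combo {N : ℕ} {A B : Matrix (Fin N) (Fin N) ℝ} {c ct : ℕ → Fin N → ℝ}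
    (h1 : ∀ n : ℕ, ((n : ℝ) + 1) • c (n + 1) - A.mulVec (c (n + 1))
      = (n : ℝ) • c n - A.mulVec (c n) + B.mulVec (c n))
    (h2 : ∀ n : ℕ, ((n : ℝ) + 1) • ct (n + 1) - A.mulVec (ct (n + 1))
      = (n : ℝ) • ct n - A.mulVec (ct n) + B.mulVec (ct n))
    (a b : ℝ) (n : ℕ) :
    ((n : ℝ) + 1) • (a • c (n + 1) + b • ct (n + 1))
        - A.mulVec (a • c (n + 1) + b • ct (n + 1))
      = (n : ℝ) • (a • c n + b • ct n) - A.mulVec (a • c n + b • ct n)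
        + B.mulVec (a • c n + b • ct n) := by
  have e1 := h1 n
  have e2 := h2 n
  simp only [Matrix.mulVec_add, Matrix.mulVec_smul]
  calc ((n : ℝ) + 1) • (a • c (n + 1) + b • ct (n + 1))
        - (a • A.mulVec (c (n + 1)) + b • A.mulVec (ct (n + 1)))
      = a • (((n : ℝ) + 1) • c (n + 1) - A.mulVec (c (n + 1)))
        + b • (((n : ℝ) + 1) • ct (n + 1) - A.mulVec (ct (n + 1))) := by module
    _ = a • ((n : ℝ) • c n - A.mulVec (c n) + B.mulVec (c n))
        + b • ((n : ℝ) • ct n - A.mulVec (ct n) + B.mulVec (ct n)) := by rw [e1, e2]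
    _ = _ := by module

/-- Let `η_i > 0` for `1 ≤ i ≤ N-1` and `δ ∈ (0,1]`. If
`θ, θ̃ : [0, δ) → ℝ^N` are power-series solutions of
`ξ(ξ-1)θ' = (ξ-1)Aθ - ξBθ` on `(0, δ)`, then `Aθ(0) = 0` and `Aθ̃(0) = 0`; if
moreover `θ(0) = θ̃(0)` then `θ = θ̃` on `[0, δ)`. Consequently any two such
solutions are linearly dependent on `[0, δ)` (the solution space is at most
one-dimensional). -/
theorem powerSeries_solution_unique (N : ℕ) (hN : 1 ≤ N) (η : ℕ → ℝ)
    (hη : ∀ i : ℕ, 1 ≤ i → i ≤ N - 1 → 0 < η i)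
    (δ : ℝ) (hδ : 0 < δ) (hδ' : δ ≤ 1)
    (θ θt : ℝ → (Fin N → ℝ))
    (hθser : IsPowerSeriesOn N θ δ) (hθtser : IsPowerSeriesOn N θt δ)
    (hθ : ∀ ξ ∈ Set.Ioo 0 δ,
      (ξ * (ξ - 1)) • deriv θ ξ
        = (ξ - 1) • (unboundedA N η).mulVec (θ ξ)
          - ξ • (unboundedB N η).mulVec (θ ξ))
    (hθt : ∀ ξ ∈ Set.Ioo 0 δ,
      (ξ * (ξ - 1)) • deriv θt ξ
        = (ξ - 1) • (unboundedA N η).mulVec (θt ξ)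
          - ξ • (unboundedB N η).mulVec (θt ξ)) :
    (unboundedA N η).mulVec (θ 0) = 0 ∧
    (unboundedA N η).mulVec (θt 0) = 0 ∧
    (θ 0 = θt 0 → ∀ ξ : ℝ, 0 ≤ ξ → ξ < δ → θ ξ = θt ξ) ∧
    ∃ a b : ℝ, ¬(a = 0 ∧ b = 0) ∧
      ∀ ξ : ℝ, 0 ≤ ξ → ξ < δ → a • θ ξ + b • θt ξ = 0 := by
  obtain ⟨c, hc⟩ := hθser
  obtain ⟨ct, hct⟩ := hθtser
  set A := unboundedA N η with hA
  set B := unboundedB N η with hB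
  -- coefficient identities
  have hce := LLE.vec_zero hδ (LLE.coeff_rec A B hδ hc hθ)
  have hcte := LLE.vec_zero hδ (LLE.coeff_rec A B hδ hct hθt)
  have hA0c : A.mulVec (c 0) = 0 := hce 0
  have hA0ct : A.mulVec (ct 0) = 0 := hcte 0
  have hrecc : ∀ n : ℕ, ((n : ℝ) + 1) • c (n + 1) - A.mulVec (c (n + 1))
      = (n : ℝ) • c n - A.mulVec (c n) + B.mulVec (c n) := by
    intro n
    have h1 := hce (n + 1)
    have h2 : (n : ℝ) • c n - A.mulVec (c n) + B.mulVec (c n)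
        - (((n : ℝ) + 1) • c (n + 1) - A.mulVec (c (n + 1))) = 0 := by
      rw [← h1]; module
    exact (sub_eq_zero.mp h2).symm
  have hrecct : ∀ n : ℕ, ((n : ℝ) + 1) • ct (n + 1) - A.mulVec (ct (n + 1))
      = (n : ℝ) • ct n - A.mulVec (ct n) + B.mulVec (ct n) := by
    intro n
    have h1 := hcte (n + 1)
    have h2 : (n : ℝ) • ct n - A.mulVec (ct n) + B.mulVec (ct n)
        - (((n : ℝ) + 1) • ct (n + 1) - A.mulVec (ct (n + 1))) = 0 := by
      rw [← h1]; module
    exact (sub_eq_zero.mp h2).symm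
  -- values at 0
  have hval0 : ∀ (f : ℝ → Fin N → ℝ) (d : ℕ → Fin N → ℝ),
      (∀ ξ : ℝ, 0 ≤ ξ → ξ < δ → HasSum (fun n : ℕ => ξ ^ n • d n) (f ξ)) → f 0 = d 0 := by
    intro f d hd
    have h1 := hd 0 le_rfl hδ
    have h2 : HasSum (fun n : ℕ => (0 : ℝ) ^ n • d n) (d 0) := by
      have h3 : (fun n : ℕ => (0 : ℝ) ^ n • d n) = fun n => if n = 0 then d 0 else 0 := by
        funext n; cases n <;> simp
      rw [h3]
      exact hasSum_ite_eq 0 (d 0)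
    exact h1.unique h2
  have hθ0 : θ 0 = c 0 := hval0 θ c hc
  have hθt0 : θt 0 = ct 0 := hval0 θt ct hct
  refine ⟨by rw [hθ0]; exact hA0c, by rw [hθt0]; exact hA0ct, ?_, ?_⟩
  · -- uniqueness
    intro hEq ξ hξ0 hξδ
    have hc0 : (fun n : ℕ => (1:ℝ) • c n + (-1:ℝ) • ct n) 0 = 0 := by
      simp only [one_smul, neg_one_smul]
      rw [← hθ0, ← hθt0, hEq]
      abel
    have hfrec := fun n => LLE.rec_combo hrecc hrecct 1 (-1) n
    have hfz := LLE.rec_zero (B := B) (c := fun n : ℕ => (1:ℝ) • c n + (-1:ℝ) • ct n) hη hc0 hfrec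
    have hcct : c = ct := by
      funext n
      have h1 := hfz n
      simp only [one_smul, neg_one_smul] at h1
      have h2 : c n - ct n = 0 := by rw [← h1]; abel
      exact sub_eq_zero.mp h2
    rw [hcct] at hc
    exact (hc ξ hξ0 hξδ).unique (hct ξ hξ0 hξδ)
  · -- linear dependence
    by_cases hz : c 0 = 0
    · refine ⟨1, 0, by simp, fun ξ h1 h2 => ?_⟩
      have hc0' : (fun n : ℕ => (1:ℝ) • c n + (0:ℝ) • ct n) 0 = 0 := by simp [hz]
      have hfrec := fun n => LLE.rec_combo hrecc hrecct 1 0 n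
      have hfz := LLE.rec_zero (B := B) (c := fun n : ℕ => (1:ℝ) • c n + (0:ℝ) • ct n) hη hc0' hfrec
      have hcz : ∀ n, c n = 0 := by
        intro n
        have := hfz n
        simpa using this
      have h3 : HasSum (fun n : ℕ => ξ ^ n • c n) 0 := by
        have h4 : (fun n : ℕ => ξ ^ n • c n) = fun _ => 0 := by
          funext n; rw [hcz n]; simp
        rw [h4]
        exact hasSum_zero
      have h4 : θ ξ = 0 := (hc ξ h1 h2).unique h3
      simp [h4]
    · have hN0 : 0 < N := hN
      set i0 : Fin N := ⟨0, hN0⟩ with hi0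
      have hker : ∀ v : Fin N → ℝ, A.mulVec v = 0 → v i0 = 0 → v = 0 := by
        intro v hv h0
        refine LLE.ker_lemma hη hv fun i hi => ?_
        have h1 : i = i0 := Fin.ext (by rw [hi])
        rw [h1]
        exact h0
      have hc00 : c 0 i0 ≠ 0 := fun hcon => hz (hker (c 0) hA0c hcon)
      refine ⟨ct 0 i0, -(c 0 i0), ?_, ?_⟩
      · rintro ⟨h1, h2⟩
        exact hc00 (by linarith [neg_eq_zero.mp h2])
      · intro ξ h1 h2
        have hf0 : (fun n : ℕ => (ct 0 i0) • c n + (-(c 0 i0)) • ct n) 0 = 0 := by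
          apply hker
          · show A.mulVec ((ct 0 i0) • c 0 + (-(c 0 i0)) • ct 0) = 0
            rw [Matrix.mulVec_add, Matrix.mulVec_smul, Matrix.mulVec_smul, hA0c, hA0ct]
            simp
          · simp only [Pi.add_apply, Pi.smul_apply, smul_eq_mul]
            ring
        have hfrec := fun n => LLE.rec_combo hrecc hrecct (ct 0 i0) (-(c 0 i0)) n
        have hfz := LLE.rec_zero (B := B) (c := fun n : ℕ => (ct 0 i0) • c n + (-(c 0 i0)) • ct n) hη hf0 hfrec
        have h3 := ((hc ξ h1 h2).const_smul (ct 0 i0)).add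
          ((hct ξ h1 h2).const_smul (-(c 0 i0)))
        have hfun : (fun n : ℕ => (ct 0 i0) • (ξ ^ n • c n) + (-(c 0 i0)) • (ξ ^ n • ct n))
            = fun n : ℕ => ξ ^ n • ((ct 0 i0) • c n + (-(c 0 i0)) • ct n) := by
          funext n
          rw [smul_add, smul_comm (ξ ^ n) (ct 0 i0) (c n),
            smul_comm (ξ ^ n) (-(c 0 i0)) (ct n)]
        rw [hfun] at h3
        have S2 : HasSum (fun n : ℕ => ξ ^ n • ((ct 0 i0) • c n + (-(c 0 i0)) • ct n)) 0 := by
          have h4 : (fun n : ℕ => ξ ^ n • ((ct 0 i0) • c n + (-(c 0 i0)) • ct n))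
              = fun _ => 0 := by
            funext n
            have h5 : ct 0 i0 • c n + -c 0 i0 • ct n = 0 := hfz n
            rw [h5]
            simp
          rw [h4]
          exact hasSum_zero
        exact h3.unique S2
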